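/- arXiv:1501.00912 — 3 statements merged into one kernel-verified Lean document; each statement's English description precedes it below -/
import Mathlib

section
/- Let B be a rectangular band. Then the reduction system on the free semigroup on {ē : e ∈ B} induced by the presentation of IG(B) is locally confluent (hence, being noetherian, confluent), and every element of IG(B) has a unique normal form: every congruence class of words contains exactly one irreducible word. -/
/-! Common definitions: free idempotent generated semigroups over bands,
generalised Green's relations, and abundancy notions. -/

/-- `(e, f)` is a *basic pair* if `ef ∈ {e,f}` or `fe ∈ {e,f}`. -/
def basicPair {B : Type*} [Mul B] (e f : B) : Prop :=
  e * f = e ∨ e * f = f ∨ f * e = e ∨ f * e = f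

/-- The defining congruence of the free idempotent generated semigroup `IG B`:
the congruence on the free semigroup on `{ē : e ∈ B}` generated by the relations
`ē f̄ = (ef)‾` for basic pairs `(e, f)`. -/
def igCon (B : Type*) [Semigroup B] : Con (FreeSemigroup B) :=
  conGen fun w₁ w₂ => ∃ e f : B, basicPair e f ∧
    w₁ = FreeSemigroup.of e * FreeSemigroup.of f ∧ w₂ = FreeSemigroup.of (e * f)

/-- The free idempotent generated semigroup over a band `B`. -/
abbrev IG (B : Type*) [Semigroup B] := (igCon B).Quotient

/-- The canonical generator `ē` of `IG B`. -/
def igOf {B : Type*} [Semigroup B] (e : B) : IG B :=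
  ((FreeSemigroup.of e : FreeSemigroup B) : (igCon B).Quotient)

/-- `prodSeq x a b = x a * x (a+1) * ⋯ * x b` (it is `x a` when `b ≤ a`). -/
def prodSeq {M : Type*} [Mul M] (x : ℕ → M) (a b : ℕ) : M :=
  (List.range (b - a)).foldl (fun acc i => acc * x (a + i + 1)) (x a)

/-- The word `x̄_a x̄_{a+1} ⋯ x̄_b` in the free semigroup on `{ē : e ∈ B}`. -/
def freeWord {B : Type*} (x : ℕ → B) (a b : ℕ) : FreeSemigroup B :=
  prodSeq (fun i => FreeSemigroup.of (x i)) a b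

/-- The element `x̄_a x̄_{a+1} ⋯ x̄_b` of `IG B`. -/
def igWord {B : Type*} [Semigroup B] (x : ℕ → B) (a b : ℕ) : IG B :=
  ((freeWord x a b : FreeSemigroup B) : (igCon B).Quotient)

/-- Green's relation `𝓡`: `a 𝓡 b` iff `a = b` or `as = b`, `bt = a` for some `s, t`. -/
def GreenR {S : Type*} [Semigroup S] (a b : S) : Prop :=
  a = b ∨ ∃ s t : S, a * s = b ∧ b * t = a

/-- Green's relation `𝓛`: `a 𝓛 b` iff `a = b` or `sa = b`, `tb = a` for some `s, t`. -/
def GreenL {S : Type*} [Semigroup S] (a b : S) : Prop :=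
  a = b ∨ ∃ s t : S, s * a = b ∧ t * b = a

/-- `a 𝓡* b` iff for all `x, y ∈ S¹`, `xa = ya ↔ xb = yb`. -/
def RStar {S : Type*} [Semigroup S] (a b : S) : Prop :=
  ∀ x y : WithOne S,
    x * (a : WithOne S) = y * (a : WithOne S) ↔ x * (b : WithOne S) = y * (b : WithOne S)

/-- `a 𝓛* b` iff for all `x, y ∈ S¹`, `ax = ay ↔ bx = by`. -/
def LStar {S : Type*} [Semigroup S] (a b : S) : Prop :=
  ∀ x y : WithOne S,
    (a : WithOne S) * x = (a : WithOne S) * y ↔ (b : WithOne S) * x = (b : WithOne S) * y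

/-- `a 𝓡̃ b` iff for every idempotent `e`, `ea = a ↔ eb = b`. -/
def RTilde {S : Type*} [Semigroup S] (a b : S) : Prop :=
  ∀ e : S, IsIdempotentElem e → (e * a = a ↔ e * b = b)

/-- `a 𝓛̃ b` iff for every idempotent `e`, `ae = a ↔ be = b`. -/
def LTilde {S : Type*} [Semigroup S] (a b : S) : Prop :=
  ∀ e : S, IsIdempotentElem e → (a * e = a ↔ b * e = b)

/-- A semigroup is *abundant* if every `𝓡*`-class and every `𝓛*`-class
contains an idempotent. -/
def Abundant (S : Type*) [Semigroup S] : Prop :=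
  ∀ a : S, (∃ e : S, IsIdempotentElem e ∧ RStar a e) ∧
    (∃ e : S, IsIdempotentElem e ∧ LStar a e)

/-- A semigroup is *weakly abundant* if every `𝓡̃`-class and every `𝓛̃`-class
contains an idempotent. -/
def WeaklyAbundant (S : Type*) [Semigroup S] : Prop :=
  ∀ a : S, (∃ e : S, IsIdempotentElem e ∧ RTilde a e) ∧
    (∃ e : S, IsIdempotentElem e ∧ LTilde a e)

/-- On a band, `x` and `y` are `𝒟`-equivalent iff `xyx = x` and `yxy = y`. -/
def dEquiv {B : Type*} [Mul B] (x y : B) : Prop :=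
  x * y * x = x ∧ y * x * y = y

/-- On a band, `x` and `y` are `𝒥`-incomparable iff `xyx ≠ x` and `yxy ≠ y`. -/
def jIncomp {B : Type*} [Mul B] (x y : B) : Prop :=
  x * y * x ≠ x ∧ y * x * y ≠ y

/-- One step of the reduction system induced by the presentation of `IG B`:
replace a factor `ē f̄`, with `(e,f)` a basic pair, by `(ef)‾`. -/
def RedStep {B : Type*} [Semigroup B] (w w' : FreeSemigroup B) : Prop :=
  ∃ (p q : List B) (e f : B), basicPair e f ∧
    w.head :: w.tail = p ++ e :: f :: q ∧
    w'.head :: w'.tail = p ++ (e * f) :: q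

/-- A word is in *normal form* (irreducible) if no reduction step applies. -/
def IsNF {B : Type*} [Semigroup B] (w : FreeSemigroup B) : Prop :=
  ∀ w', ¬ RedStep w w'

/-- `x̄₁ ⋯ x̄ₙ` (letters `x 1, …, x n`) is in *almost normal form* witnessed by
block boundaries `idx 0 = 0 < idx 1 < ⋯ < idx r = n`: within each block all
letters are `𝒟`-equivalent, and letters in adjacent blocks are incomparable. -/
def AlmostNF {B : Type*} [Mul B] (x : ℕ → B) (n r : ℕ) (idx : ℕ → ℕ) : Prop :=
  1 ≤ r ∧ idx 0 = 0 ∧ idx r = n ∧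
  (∀ k < r, idx k < idx (k + 1)) ∧
  (∀ k < r, ∀ p q : ℕ, idx k < p → p ≤ idx (k + 1) → idx k < q → q ≤ idx (k + 1) →
    dEquiv (x p) (x q)) ∧
  (∀ k : ℕ, k + 1 < r → ∀ p q : ℕ, idx k < p → p ≤ idx (k + 1) →
    idx (k + 1) < q → q ≤ idx (k + 2) → jIncomp (x p) (x q))

/-- Condition (P) for `IG B`. -/
def CondP (B : Type*) [Semigroup B] : Prop :=
  ∀ (n m r : ℕ) (u v : ℕ → B) (iu iv : ℕ → ℕ),
    AlmostNF u n r iu → AlmostNF v m r iv →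
    igWord u 1 n = igWord v 1 m →
    ((∀ s : ℕ, 1 ≤ s → s ≤ r →
        (u (iu s) * v (iv s) = u (iu s) ∧ v (iv s) * u (iu s) = v (iv s)) →
        igWord u 1 (iu s) = igWord v 1 (iv s)) ∧
      (∀ t : ℕ, t + 1 ≤ r →
        (u (iu t + 1) * v (iv t + 1) = v (iv t + 1) ∧
          v (iv t + 1) * u (iu t + 1) = u (iu t + 1)) →
        igWord u (iu t + 1) n = igWord v (iv t + 1) m))

/-- A normal band is *pliant* if for every `𝒟`-class `D` there is `c ∈ D` with
`u e u = c` for every `e ∈ D` and every `u` strictly `𝒥`-above `D`. -/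
def Pliant (B : Type*) [Mul B] : Prop :=
  ∀ d : B, ∃ c : B, dEquiv c d ∧
    ∀ e u : B, dEquiv e d → (e * u * e = e ∧ u * e * u ≠ u) → u * e * u = c

/-! In a rectangular band every basic pair `(e, f)` has `ef ∈ {e, f}`, so each reduction
step deletes a letter: the system terminates. Two redexes that overlap in a word `ē f̄ ḡ` can be
brought together in at most one further step on each side, so the system is even strongly
confluent, hence confluent. Words that become equal in `IG B` are therefore joinable
(joinability is a congruence containing the defining relations), and two irreducible
joinable words coincide. -/

open Relation

namespace FreeSemigroup

variable {B : Type*}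

def toList (w : FreeSemigroup B) : List B := w.head :: w.tail

theorem toList_mul (u v : FreeSemigroup B) : (u * v).toList = u.toList ++ v.toList := rfl

theorem toList_injective : Function.Injective (toList (B := B)) := by
  rintro ⟨a, s⟩ ⟨b, t⟩ h
  obtain ⟨rfl, rfl⟩ := List.cons_eq_cons.1 h
  rfl

theorem exists_toList_eq {l : List B} (hl : l ≠ []) : ∃ w : FreeSemigroup B, w.toList = l := by
  obtain ⟨a, t, rfl⟩ := List.exists_cons_of_ne_nil hl
  exact ⟨⟨a, t⟩, rfl⟩

end FreeSemigroup

open FreeSemigroup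

section Semigroup

variable {B : Type*} [Semigroup B]

/-- `RedStep` read on the underlying lists of letters, where the context may be empty. -/
def ListRedStep (l l' : List B) : Prop :=
  ∃ (p q : List B) (e f : B), basicPair e f ∧
    l = p ++ e :: f :: q ∧ l' = p ++ (e * f) :: q

theorem redStep_iff_listRedStep {w w' : FreeSemigroup B} :
    RedStep w w' ↔ ListRedStep w.toList w'.toList := Iff.rfl

theorem ListRedStep.ne_nil {l l' : List B} (h : ListRedStep l l') : l' ≠ [] := by
  obtain ⟨p, q, e, f, -, -, rfl⟩ := h
  simp

theorem ListRedStep.exists_reflGen_redStep {w : FreeSemigroup B} {l : List B}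
    (h : ReflGen ListRedStep w.toList l) : ∃ z, z.toList = l ∧ ReflGen RedStep w z := by
  rcases h with _ | h
  · exact ⟨w, rfl, .refl⟩
  · obtain ⟨z, rfl⟩ := exists_toList_eq h.ne_nil
    exact ⟨z, rfl, .single h⟩

theorem RedStep.length_lt {w w' : FreeSemigroup B} (h : RedStep w w') : w'.length < w.length := by
  obtain ⟨p, q, e, f, -, h, h'⟩ := h
  have hw := congrArg List.length h
  have hw' := congrArg List.length h'
  simp only [List.length_cons, List.length_append] at hw hw'
  simp only [FreeSemigroup.length]
  omega

theorem RedStep.mul_left (a : FreeSemigroup B) {w w' : FreeSemigroup B} (h : RedStep w w') :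
    RedStep (a * w) (a * w') := by
  obtain ⟨p, q, e, f, hef, h, h'⟩ := h
  refine ⟨a.toList ++ p, q, e, f, hef, ?_, ?_⟩
  · change (a * w).toList = _
    rw [toList_mul, List.append_assoc, ← h]; rfl
  · change (a * w').toList = _
    rw [toList_mul, List.append_assoc, ← h']; rfl

theorem RedStep.mul_right (b : FreeSemigroup B) {w w' : FreeSemigroup B} (h : RedStep w w') :
    RedStep (w * b) (w' * b) := by
  obtain ⟨p, q, e, f, hef, h, h'⟩ := h
  refine ⟨p, q ++ b.toList, e, f, hef, ?_, ?_⟩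
  · change (w * b).toList = _
    rw [toList_mul, show w.toList = _ from h]; simp
  · change (w' * b).toList = _
    rw [toList_mul, show w'.toList = _ from h']; simp

theorem exists_reflTransGen_redStep_isNF (w : FreeSemigroup B) :
    ∃ u, ReflTransGen RedStep w u ∧ IsNF u := by
  by_cases hw : IsNF w
  · exact ⟨w, .refl, hw⟩
  · obtain ⟨w', hw'⟩ := not_forall_not.1 hw
    obtain ⟨u, hu, hnf⟩ := exists_reflTransGen_redStep_isNF w'
    exact ⟨u, .head hw' hu, hnf⟩
termination_by w.length
decreasing_by exact hw'.length_lt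

/-- The empty list is sent to the adjoined identity. -/
def igEval (l : List B) : WithOne (IG B) := (l.map fun e => (igOf e : WithOne (IG B))).prod

theorem igEval_toList (w : FreeSemigroup B) : igEval w.toList = ((w : IG B) : WithOne (IG B)) := by
  obtain ⟨a, t⟩ := w
  induction t generalizing a with
  | nil => simp [igEval, toList, igOf, FreeSemigroup.of]
  | cons b t ih =>
    have hmul : (⟨a, b :: t⟩ : FreeSemigroup B) = FreeSemigroup.of a * ⟨b, t⟩ := rfl
    have hb := ih b
    simp only [igEval, toList, List.map_cons, List.prod_cons] at hb ⊢
    rw [hb, hmul, Con.coe_mul, WithOne.coe_mul, igOf]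

theorem igOf_mul_igOf {e f : B} (hef : basicPair e f) : igOf e * igOf f = igOf (e * f) :=
  (Con.eq _).2 (ConGen.Rel.of _ _ ⟨e, f, hef, rfl, rfl⟩)

theorem RedStep.igCon {w w' : FreeSemigroup B} (h : RedStep w w') : igCon B w w' := by
  obtain ⟨p, q, e, f, hef, h, h'⟩ := h
  refine (Con.eq _).1 (WithOne.coe_inj.1 ?_)
  rw [← igEval_toList, ← igEval_toList, toList, toList, h, h']
  simp only [igEval, List.map_append, List.map_cons, List.prod_append, List.prod_cons,
    ← igOf_mul_igOf hef, WithOne.coe_mul, mul_assoc]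

theorem igCon_of_reflTransGen {w w' : FreeSemigroup B} (h : ReflTransGen RedStep w w') :
    igCon B w w' := by
  induction h with
  | refl => exact (igCon B).refl _
  | tail _ hstep ih => exact (igCon B).trans ih hstep.igCon

/-- Two steps at positions at least two apart commute, and steps at the same position agree;
only the overlap `ē f̄ ḡ` is left open as `hoverlap`. -/
theorem ListRedStep.diamond_of_overlap
    (hoverlap : ∀ (p q : List B) {e f g : B}, basicPair e f → basicPair f g →
      ∃ z, ReflGen ListRedStep (p ++ (e * f) :: g :: q) z ∧
        ReflGen ListRedStep (p ++ e :: (f * g) :: q) z)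
    {p₁ q₁ p₂ q₂ : List B} {e₁ f₁ e₂ f₂ : B}
    (hef₁ : basicPair e₁ f₁) (hef₂ : basicPair e₂ f₂) (hlen : p₁.length ≤ p₂.length)
    (heq : p₁ ++ e₁ :: f₁ :: q₁ = p₂ ++ e₂ :: f₂ :: q₂) :
    ∃ z, ReflGen ListRedStep (p₁ ++ (e₁ * f₁) :: q₁) z ∧
      ReflGen ListRedStep (p₂ ++ (e₂ * f₂) :: q₂) z := by
  obtain ⟨s, rfl, hs⟩ : ∃ s, p₂ = p₁ ++ s ∧ e₁ :: f₁ :: q₁ = s ++ e₂ :: f₂ :: q₂ := by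
    rcases List.append_eq_append_iff.1 heq with ⟨s, hs⟩ | ⟨s, hp, hs⟩
    · exact ⟨s, hs⟩
    · obtain rfl : s = [] := by
        rw [← List.length_eq_zero_iff]
        have := congrArg List.length hp
        simp only [List.length_append] at this
        omega
      simp_all
  match s, hs with
  | [], hs =>
    obtain ⟨rfl, rfl, rfl⟩ : e₁ = e₂ ∧ f₁ = f₂ ∧ q₁ = q₂ := by simpa using hs
    exact ⟨_, .refl, by simp [ReflGen.refl]⟩
  | [g], hs =>
    obtain ⟨rfl, rfl, rfl⟩ : e₁ = g ∧ f₁ = e₂ ∧ q₁ = f₂ :: q₂ := by simpa using hs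
    simpa using hoverlap p₁ q₂ hef₁ hef₂
  | g :: h :: s, hs =>
    obtain ⟨rfl, rfl, rfl⟩ : e₁ = g ∧ f₁ = h ∧ q₁ = s ++ e₂ :: f₂ :: q₂ := by simpa using hs
    exact ⟨p₁ ++ (e₁ * f₁) :: (s ++ (e₂ * f₂) :: q₂),
      .single ⟨p₁ ++ (e₁ * f₁) :: s, q₂, e₂, f₂, hef₂, by simp, by simp⟩,
      .single ⟨p₁, s ++ (e₂ * f₂) :: q₂, e₁, f₁, hef₁, by simp, by simp⟩⟩

end Semigroup

section RectangularBand

variable {B : Type*} [Semigroup B] (hrect : ∀ x y : B, x * y * x = x)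
include hrect

theorem basicPair.mul_eq_left_or_right {e f : B} (h : basicPair e f) :
    e * f = e ∨ e * f = f := by
  rcases h with h | h | h | h
  · exact .inl h
  · exact .inr h
  · exact .inr (by rw [← h, hrect])
  · exact .inl (by rw [← h, ← mul_assoc, hrect])

theorem ListRedStep.overlap (p q : List B) {e f g : B} (hef : basicPair e f)
    (hfg : basicPair f g) :
    ∃ z, ReflGen ListRedStep (p ++ (e * f) :: g :: q) z ∧
      ReflGen ListRedStep (p ++ e :: (f * g) :: q) z := by
  have hassoc (hefg : basicPair e (f * g)) :
      ReflGen ListRedStep (p ++ e :: (f * g) :: q) (p ++ (e * f * g) :: q) :=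
    .single ⟨p, q, e, f * g, hefg, rfl, by rw [mul_assoc]⟩
  rcases hef.mul_eq_left_or_right hrect with hef' | hef'
  · rcases hfg.mul_eq_left_or_right hrect with hfg' | hfg'
    · refine ⟨_, .single ⟨p, q, e * f, g, .inl ?_, rfl, rfl⟩, hassoc (.inl ?_)⟩
      · rw [mul_assoc, hfg']
      · rw [hfg', hef']
    · exact ⟨_, .refl, by rw [hef', hfg']⟩
  · refine ⟨_, .single ⟨p, q, e * f, g, ?_, rfl, rfl⟩, hassoc (.inr (.inl ?_))⟩
    · rwa [hef']
    · rw [← mul_assoc, hef']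

theorem ListRedStep.diamond {l x y : List B} (hx : ListRedStep l x) (hy : ListRedStep l y) :
    ∃ z, ReflGen ListRedStep x z ∧ ReflGen ListRedStep y z := by
  obtain ⟨p₁, q₁, e₁, f₁, hef₁, rfl, rfl⟩ := hx
  obtain ⟨p₂, q₂, e₂, f₂, hef₂, hl, rfl⟩ := hy
  rcases le_total p₁.length p₂.length with hle | hle
  · exact diamond_of_overlap (overlap hrect) hef₁ hef₂ hle hl
  · obtain ⟨z, h₁, h₂⟩ := diamond_of_overlap (overlap hrect) hef₂ hef₁ hle hl.symm
    exact ⟨z, h₂, h₁⟩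

theorem RedStep.diamond {w x y : FreeSemigroup B} (hx : RedStep w x) (hy : RedStep w y) :
    ∃ z, ReflGen RedStep x z ∧ ReflGen RedStep y z := by
  obtain ⟨l, hxl, hyl⟩ := ListRedStep.diamond hrect (redStep_iff_listRedStep.1 hx)
    (redStep_iff_listRedStep.1 hy)
  obtain ⟨z, rfl, hxz⟩ := ListRedStep.exists_reflGen_redStep hxl
  obtain ⟨z', hz', hyz'⟩ := ListRedStep.exists_reflGen_redStep hyl
  exact ⟨z, hxz, toList_injective hz' ▸ hyz'⟩

theorem RedStep.church_rosser {w x y : FreeSemigroup B} (hx : ReflTransGen RedStep w x)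
    (hy : ReflTransGen RedStep w y) : Join (ReflTransGen RedStep) x y :=
  Relation.church_rosser (fun _ _ _ hx hy =>
    (RedStep.diamond hrect hx hy).imp fun _ h => ⟨h.1, h.2.to_reflTransGen⟩) hx hy

def redStepJoinCon : Con (FreeSemigroup B) where
  r := Join (ReflTransGen RedStep)
  iseqv := equivalence_join fun _ _ _ => RedStep.church_rosser hrect
  mul' := by
    rintro a b c d ⟨u, hau, hbu⟩ ⟨v, hcv, hdv⟩
    have hleft (x : FreeSemigroup B) {y y'} (h : ReflTransGen RedStep y y') :=
      h.lift (x * ·) fun _ _ => RedStep.mul_left x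
    have hright (x : FreeSemigroup B) {y y'} (h : ReflTransGen RedStep y y') :=
      h.lift (· * x) fun _ _ => RedStep.mul_right x
    exact ⟨u * v, (hright c hau).trans (hleft u hcv), (hright d hbu).trans (hleft u hdv)⟩

theorem igCon_le_redStepJoinCon : igCon B ≤ redStepJoinCon hrect :=
  Con.conGen_le.2 fun _ _ ⟨e, f, hef, hw, hw'⟩ =>
    ⟨_, .single ⟨[], [], e, f, hef, by rw [hw]; rfl, by rw [hw']; rfl⟩, .refl⟩

theorem IsNF.eq_of_igCon {u v : FreeSemigroup B} (hu : IsNF u) (hv : IsNF v)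
    (h : igCon B u v) : u = v := by
  obtain ⟨z, huz, hvz⟩ := igCon_le_redStepJoinCon hrect h
  exact ((reflTransGen_iff_eq hu).1 huz).symm.trans ((reflTransGen_iff_eq hv).1 hvz)

end RectangularBand

theorem IG_rectangular_band_unique_normal_forms_general
    {B : Type*} [Semigroup B]
    (hrect : ∀ x y : B, x * y * x = x) :
    (∀ w x y : FreeSemigroup B, RedStep w x → RedStep w y →
      ∃ z : FreeSemigroup B, Relation.ReflTransGen RedStep x z ∧
        Relation.ReflTransGen RedStep y z) ∧
    (∀ w x y : FreeSemigroup B, Relation.ReflTransGen RedStep w x →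
      Relation.ReflTransGen RedStep w y →
      ∃ z : FreeSemigroup B, Relation.ReflTransGen RedStep x z ∧
        Relation.ReflTransGen RedStep y z) ∧
    (∀ w : FreeSemigroup B, ∃! u : FreeSemigroup B, igCon B w u ∧ IsNF u) := by
  refine ⟨fun w x y hx hy => ?_, fun w x y => RedStep.church_rosser hrect, fun w => ?_⟩
  · obtain ⟨z, hxz, hyz⟩ := RedStep.diamond hrect hx hy
    exact ⟨z, hxz.to_reflTransGen, hyz.to_reflTransGen⟩
  · obtain ⟨u, hwu, hu⟩ := exists_reflTransGen_redStep_isNF w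
    have hwu := igCon_of_reflTransGen hwu
    exact ⟨u, ⟨hwu, hu⟩, fun v ⟨hwv, hv⟩ =>
      hv.eq_of_igCon hrect hu ((igCon B).trans ((igCon B).symm hwv) hwu)⟩

/-- For a rectangular band `B`, the reduction system induced by
the presentation of `IG B` is locally confluent, confluent, and every
congruence class of `igCon B` contains exactly one irreducible word. -/
theorem IG_rectangular_band_unique_normal_forms
    {B : Type*} [Semigroup B] (hidem : ∀ x : B, x * x = x)
    (hrect : ∀ x y : B, x * y * x = x) :
    (∀ w x y : FreeSemigroup B, RedStep w x → RedStep w y →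
      ∃ z : FreeSemigroup B, Relation.ReflTransGen RedStep x z ∧
        Relation.ReflTransGen RedStep y z) ∧
    (∀ w x y : FreeSemigroup B, Relation.ReflTransGen RedStep w x →
      Relation.ReflTransGen RedStep w y →
      ∃ z : FreeSemigroup B, Relation.ReflTransGen RedStep x z ∧
        Relation.ReflTransGen RedStep y z) ∧
    (∀ w : FreeSemigroup B, ∃! u : FreeSemigroup B, igCon B w u ∧ IsNF u) :=
  IG_rectangular_band_unique_normal_forms_general hrect
end

section
/- Let B be a band and let x₁, …, xₙ ∈ B be pairwise 𝒟-equivalent (all lie in one rectangular 𝒟-class of B). Then x̄₁⋯x̄ₙ is a regular element of IG(B): there exists w ∈ IG(B) with (x̄₁⋯x̄ₙ)·w·(x̄₁⋯x̄ₙ) = x̄₁⋯x̄ₙ. -/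
section Aux

variable {B : Type*} [Semigroup B]

/-- The basic-pair relation holds in `IG B`. -/
lemma igOf_mul_of_basic {e f : B} (h : basicPair e f) :
    igOf e * igOf f = igOf (e * f) := by
  have : (igCon B) (FreeSemigroup.of e * FreeSemigroup.of f) (FreeSemigroup.of (e * f)) :=
    ConGen.Rel.of _ _ ⟨e, f, h, rfl, rfl⟩
  exact (Con.eq _).mpr this

lemma prodSeq_self {M : Type*} [Mul M] (x : ℕ → M) (a : ℕ) :
    prodSeq x a a = x a := by
  simp [prodSeq]

lemma prodSeq_succ {M : Type*} [Mul M] (x : ℕ → M) {a b : ℕ} (h : a ≤ b) :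
    prodSeq x a (b + 1) = prodSeq x a b * x (b + 1) := by
  unfold prodSeq
  rw [Nat.succ_sub h, List.range_succ, List.foldl_append]
  simp [Nat.add_sub_cancel' h]

lemma igWord_self (x : ℕ → B) (a : ℕ) : igWord x a a = igOf (x a) := by
  unfold igWord freeWord
  rw [prodSeq_self]
  rfl

lemma igWord_succ (x : ℕ → B) {a b : ℕ} (h : a ≤ b) :
    igWord x a (b + 1) = igWord x a b * igOf (x (b + 1)) := by
  unfold igWord freeWord
  rw [prodSeq_succ _ h]
  rfl

/-- The auxiliary word `z̄_{k+1} z̄_k ⋯ z̄₁` where `zᵢ = x_{i+1} x_i`. -/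
def zw (x : ℕ → B) : ℕ → IG B
  | 0 => igOf (x 2 * x 1)
  | k + 1 => igOf (x (k + 3) * x (k + 2)) * zw x k

lemma zw_head (x : ℕ → B) (hband : ∀ y : B, y * y = y) (j : ℕ) :
    igOf (x (j + 2)) * zw x j = zw x j := by
  cases j with
  | zero =>
    show igOf (x 2) * igOf (x 2 * x 1) = igOf (x 2 * x 1)
    rw [igOf_mul_of_basic (e := x 2) (f := x 2 * x 1) (Or.inr (Or.inl (by
      rw [← mul_assoc, hband]))), ← mul_assoc, hband]
  | succ k =>
    show igOf (x (k + 3)) * (igOf (x (k + 3) * x (k + 2)) * zw x k) = _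
    rw [← mul_assoc, igOf_mul_of_basic (e := x (k + 3)) (f := x (k + 3) * x (k + 2))
      (Or.inr (Or.inl (by rw [← mul_assoc, hband]))), ← mul_assoc, hband]
    rfl

lemma zw_collapse {B : Type*} [Semigroup B] (hband : ∀ y : B, y * y = y)
    (n : ℕ) (x : ℕ → B)
    (hD : ∀ i j : ℕ, 1 ≤ i → i ≤ n → 1 ≤ j → j ≤ n → dEquiv (x i) (x j)) :
    ∀ j : ℕ, j + 2 ≤ n → zw x j * igWord x 1 (j + 2) = igOf (x (j + 2)) := by
  intro j
  induction j with
  | zero =>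
    intro h2
    rw [igWord_succ x (le_refl 1), igWord_self]
    show igOf (x 2 * x 1) * (igOf (x 1) * igOf (x 2)) = igOf (x 2)
    rw [← mul_assoc,
      igOf_mul_of_basic (e := x 2 * x 1) (f := x 1)
        (Or.inl (by rw [mul_assoc, hband])),
      mul_assoc, hband,
      igOf_mul_of_basic (e := x 2 * x 1) (f := x 2)
        (Or.inr (Or.inl ((hD 2 1 (by omega) h2 le_rfl (by omega)).1)))]
    rw [(hD 2 1 (by omega) h2 le_rfl (by omega)).1]
  | succ k ih =>
    intro h
    have hk2 : k + 2 ≤ n := by omega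
    have hstep : igWord x 1 (k + 3) = igWord x 1 (k + 2) * igOf (x (k + 3)) :=
      igWord_succ x (by omega)
    show igOf (x (k + 3) * x (k + 2)) * zw x k * igWord x 1 (k + 3) = igOf (x (k + 3))
    rw [hstep, mul_assoc, ← mul_assoc (zw x k), ih hk2, ← mul_assoc,
      igOf_mul_of_basic (e := x (k + 3) * x (k + 2)) (f := x (k + 2))
        (Or.inl (by rw [mul_assoc, hband])),
      mul_assoc, hband,
      igOf_mul_of_basic (e := x (k + 3) * x (k + 2)) (f := x (k + 3))
        (Or.inr (Or.inl ((hD (k + 3) (k + 2) (by omega) h (by omega) hk2).1)))]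
    rw [(hD (k + 3) (k + 2) (by omega) h (by omega) hk2).1]

end Aux

/-- Let `B` be a band and `x₁, …, xₙ ∈ B` pairwise
`𝒟`-equivalent. Then `x̄₁ ⋯ x̄ₙ` is a regular element of `IG B`. -/
theorem IG_band_one_Dclass_word_regular
    {B : Type*} [Semigroup B] (hband : ∀ x : B, x * x = x)
    (n : ℕ) (hn : 1 ≤ n) (x : ℕ → B)
    (hD : ∀ i j : ℕ, 1 ≤ i → i ≤ n → 1 ≤ j → j ≤ n → dEquiv (x i) (x j)) :
    ∃ w : IG B, igWord x 1 n * w * igWord x 1 n = igWord x 1 n := by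
  match n, hn with
  | 1, _ =>
    refine ⟨igOf (x 1), ?_⟩
    rw [igWord_self,
      igOf_mul_of_basic (e := x 1) (f := x 1) (Or.inl (hband (x 1))), hband,
      igOf_mul_of_basic (e := x 1) (f := x 1) (Or.inl (hband (x 1))), hband]
  | (m + 2), _ =>
    refine ⟨zw x m, ?_⟩
    have hW : igWord x 1 (m + 2) = igWord x 1 (m + 1) * igOf (x (m + 2)) :=
      igWord_succ x (by omega)
    calc igWord x 1 (m + 2) * zw x m * igWord x 1 (m + 2)
        = igWord x 1 (m + 1) * (igOf (x (m + 2)) * zw x m) * igWord x 1 (m + 2) := by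
          rw [hW, mul_assoc (igWord x 1 (m + 1))]
      _ = igWord x 1 (m + 1) * (zw x m * igWord x 1 (m + 2)) := by
          rw [zw_head x hband, mul_assoc]
      _ = igWord x 1 (m + 1) * igOf (x (m + 2)) := by
          rw [zw_collapse hband (m + 2) x hD m le_rfl]
      _ = igWord x 1 (m + 2) := hW.symm
end

section
/- Let B be a band in which any two elements are 𝒥-comparable, i.e. for all x,y ∈ B, xyx = x or yxy = y (so B is a chain of rectangular bands). Then IG(B) is a regular semigroup. -/
/-! In a chain of rectangular bands every element of `IG B` is `𝓡`-related to a generator, hence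
regular. Prepend the letters of a word one at a time to some `b 𝓡 ē`. If `f ≼ e`, then `f̄ b 𝓡 f̄`,
since `f̄ b (ef)‾ = f̄ ē (ef)‾ = f̄`. Otherwise `e ≼ f`, and `f̄ ē = (fef)‾ ē` with `fef ≼ e` reduces
to the first case. -/

theorem exists_mul_mul_eq_self_of_greenR {S : Type*} [Semigroup S] {a e : S}
    (ha : GreenR a e) (he : IsIdempotentElem e) : ∃ w, a * w * a = a := by
  rcases ha with rfl | ⟨s, t, has, het⟩
  · exact ⟨a, by rw [he.eq, he.eq]⟩
  · exact ⟨s, by rw [has, ← het, ← mul_assoc, he.eq]⟩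

theorem greenR_iff_of_isIdempotentElem {S : Type*} [Semigroup S] {a e : S}
    (he : IsIdempotentElem e) : GreenR a e ↔ e * a = a ∧ ∃ x, a * x = e := by
  constructor
  · rintro (rfl | ⟨s, t, has, het⟩)
    · exact ⟨he.eq, a, he.eq⟩
    · exact ⟨by rw [← het, ← mul_assoc, he.eq], s, has⟩
  · rintro ⟨hea, x, hax⟩
    exact Or.inr ⟨x, a, hax, hea⟩

namespace IG

variable {B : Type*} [Semigroup B] {e f : B}

theorem igOf_mul_igOf (h : basicPair e f) : igOf e * igOf f = igOf (e * f) :=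
  (Con.eq _).2 (ConGen.Rel.of _ _ ⟨e, f, h, rfl, rfl⟩)

theorem isIdempotentElem_igOf (he : e * e = e) : IsIdempotentElem (igOf e) := by
  rw [IsIdempotentElem, igOf_mul_igOf (Or.inl he), he]

theorem igOf_mul_igOf_mul_igOf_mul_eq_left (he : e * e = e) (hf : f * f = f)
    (hfe : f * e * f = f) : igOf f * igOf e * igOf (e * f) = igOf f := by
  have hee : igOf e * igOf (e * f) = igOf (e * f) := by
    rw [igOf_mul_igOf (Or.inr (Or.inl (by rw [← mul_assoc, he]))), ← mul_assoc, he]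
  have hfef : igOf f * igOf (e * f) = igOf f := by
    rw [igOf_mul_igOf (Or.inr (Or.inr (Or.inr (by rw [mul_assoc, hf])))), ← mul_assoc, hfe]
  rw [mul_assoc, hee, hfef]

theorem igOf_mul_igOf_eq_igOf_mul_mul_mul_igOf (hf : f * f = f) (hef : e * f * e = e) :
    igOf f * igOf e = igOf (f * e * f) * igOf e := by
  have hefe : igOf (e * f) * igOf e = igOf e := by
    rw [igOf_mul_igOf (Or.inr (Or.inl hef)), hef]
  have hfef : igOf f * igOf (e * f) = igOf (f * e * f) := by
    rw [igOf_mul_igOf (Or.inr (Or.inr (Or.inr (by rw [mul_assoc, hf])))), mul_assoc]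
  rw [← hefe, ← mul_assoc, hfef, hefe]

theorem greenR_igOf_mul (he : e * e = e) (hf : f * f = f) (hfe : f * e * f = f) {b : IG B}
    (hb : GreenR b (igOf e)) : GreenR (igOf f * b) (igOf f) := by
  obtain ⟨-, x, hbx⟩ := (greenR_iff_of_isIdempotentElem (isIdempotentElem_igOf he)).1 hb
  refine (greenR_iff_of_isIdempotentElem (isIdempotentElem_igOf hf)).2 ⟨?_, x * igOf (e * f), ?_⟩
  · rw [← mul_assoc, (isIdempotentElem_igOf hf).eq]
  · rw [mul_assoc, ← mul_assoc b, hbx, ← mul_assoc, igOf_mul_igOf_mul_igOf_mul_eq_left he hf hfe]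

theorem exists_greenR_igOf_mul (hband : ∀ x : B, x * x = x)
    (hchain : ∀ p q : B, p * q * p = p ∨ q * p * q = q) {b : IG B}
    (hb : GreenR b (igOf e)) : ∃ g, GreenR (igOf f * b) (igOf g) := by
  rcases hchain f e with hfe | hef
  · exact ⟨f, greenR_igOf_mul (hband e) (hband f) hfe hb⟩
  · have heb : igOf e * b = b :=
      ((greenR_iff_of_isIdempotentElem (isIdempotentElem_igOf (hband e))).1 hb).1
    have hfb : igOf f * b = igOf (f * e * f) * b := by
      rw [← heb, ← mul_assoc, igOf_mul_igOf_eq_igOf_mul_mul_mul_igOf (hband f) hef, mul_assoc]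
    have hgeg : f * e * f * e * (f * e * f) = f * e * f := by
      rw [show f * e * f * e * (f * e * f) = f * e * (f * e) * (f * e * f) by simp only [mul_assoc],
        hband, show f * e * (f * e * f) = f * e * (f * e) * f by simp only [mul_assoc], hband]
    exact ⟨f * e * f, hfb ▸ greenR_igOf_mul (hband e) (hband _) hgeg hb⟩

theorem exists_greenR_igOf (hband : ∀ x : B, x * x = x)
    (hchain : ∀ p q : B, p * q * p = p ∨ q * p * q = q) (a : IG B) :
    ∃ e, GreenR a (igOf e) := by
  induction a using Con.induction_on with
  | H w =>
    induction w using FreeSemigroup.recOnMul with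
    | ih1 e => exact ⟨e, Or.inl rfl⟩
    | ih2 f w _ hw =>
      obtain ⟨e, hw⟩ := hw
      exact exists_greenR_igOf_mul hband hchain hw

end IG

/-- Let `B` be a band in which any two elements are
`𝒥`-comparable (a chain of rectangular bands). Then `IG B` is regular. -/
theorem IG_chain_of_rectangular_bands_regular
    {B : Type*} [Semigroup B] (hband : ∀ x : B, x * x = x)
    (hchain : ∀ p q : B, p * q * p = p ∨ q * p * q = q) :
    ∀ a : IG B, ∃ w : IG B, a * w * a = a := by
  intro a
  obtain ⟨e, ha⟩ := IG.exists_greenR_igOf hband hchain a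
  exact exists_mul_mul_eq_self_of_greenR ha (IG.isIdempotentElem_igOf (hband e))
end
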